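/- arXiv:2001.02930 — 2 statements merged into one kernel-verified Lean document; each statement's English description precedes it below -/
import Mathlib

section
/- Let V be a valuation ring with value group Γ, and let Ṽ = Π_𝒰 V be the ultrapower of V with respect to an ultrafilter 𝒰 on a set U. Then the ideal q = ∩_{z∈V, z≠0} z·Ṽ is a prime ideal of Ṽ, and hence V̄ = Ṽ/q is a valuation ring extending V. -/
/-!
Common definitions for formalizing "Immediate extensions of valuation rings
and ultrapowers" (D. Popescu).

In a valuation ring (or any commutative ring, via divisibility) we encode the
comparison of values: `val a < val b` iff `a ∣ b` and `¬ b ∣ a`, and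
`val a = val b` iff `a ∣ b ∧ b ∣ a`.
-/

universe u v

open Filter

/-- `val a < val b`, expressed via divisibility. -/
def ValLT {R : Type*} [CommRing R] (a b : R) : Prop := a ∣ b ∧ ¬ b ∣ a

/-- `val a = val b`, expressed via divisibility. -/
def ValEq {R : Type*} [CommRing R] (a b : R) : Prop := a ∣ b ∧ b ∣ a

/-- A sequence indexed by the ordinals `< lam` is pseudo convergent if
`val (v i - v i') < val (v i' - v i'')` for all `i < i' < i''`. -/
def IsPseudoConvergent {R : Type*} [CommRing R] {lam : Ordinal.{v}}
    (seq : Set.Iio lam → R) : Prop :=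
  ∀ i i' i'' : Set.Iio lam, i < i' → i' < i'' →
    ValLT (seq i - seq i') (seq i' - seq i'')

/-- `z` is a pseudo limit of the sequence `seq` if
`val (z - v i) < val (z - v i')` for all `i < i'`. -/
def IsPseudoLimit {R : Type*} [CommRing R] {lam : Ordinal.{v}}
    (seq : Set.Iio lam → R) (z : R) : Prop :=
  ∀ i i' : Set.Iio lam, i < i' → ValLT (z - seq i) (z - seq i')

/-- A pseudo convergent sequence is algebraic if some polynomial `f`
satisfies `val (f (v i)) < val (f (v i'))` for all large enough `i < i'`. -/
def IsAlgebraicSeq {R : Type*} [CommRing R] {lam : Ordinal.{v}}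
    (seq : Set.Iio lam → R) : Prop :=
  ∃ f : Polynomial R, ∃ i₀ : Set.Iio lam, ∀ i i' : Set.Iio lam,
    i₀ ≤ i → i < i' →
      ValLT (Polynomial.eval (seq i) f) (Polynomial.eval (seq i') f)

/-- A pseudo convergent sequence is transcendental if every polynomial `f`
satisfies `val (f (v i)) = val (f (v i'))` for all large enough `i < i'`. -/
def IsTranscendentalSeq {R : Type*} [CommRing R] {lam : Ordinal.{v}}
    (seq : Set.Iio lam → R) : Prop :=
  ∀ f : Polynomial R, ∃ i₀ : Set.Iio lam, ∀ i i' : Set.Iio lam,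
    i₀ ≤ i → i < i' →
      ValEq (Polynomial.eval (seq i) f) (Polynomial.eval (seq i') f)

/-- A sequence is fundamental if for every `γ` in the value group (the positive
part being cofinal, `γ` is represented by a nonzero element `z` of the ring)
there exist `i < i'` with `val (v i - v i') > val z`. -/
def IsFundamentalSeq {R : Type*} [CommRing R] {lam : Ordinal.{v}}
    (seq : Set.Iio lam → R) : Prop :=
  ∀ z : R, z ≠ 0 → ∃ i i' : Set.Iio lam, i < i' ∧ ValLT z (seq i - seq i')

/-- An extension of valuation rings `f : V →+* V'` is immediate if it is
injective and local and induces isomorphisms on value groups (equivalently,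
as `f` is local and injective, the value group map is onto) and on residue
fields (equivalently, the residue map is onto). -/
structure IsImmediate {V V' : Type*} [CommRing V] [CommRing V'] (f : V →+* V') : Prop where
  injective : Function.Injective f
  isLocal : ∀ a : V, IsUnit (f a) → IsUnit a
  value_surj : ∀ x : V', ∃ a : V, ValEq (f a) x
  residue_surj : ∀ x : V', ∃ a : V, ¬ IsUnit (x - f a)

/-- A valuation ring is complete (with respect to the valuation topology) iff
every fundamental pseudo convergent sequence has a (pseudo) limit. -/
def IsCompleteValRing (R : Type v) [CommRing R] : Prop :=
  ∀ lam : Ordinal.{v}, Order.IsSuccLimit lam → ∀ seq : Set.Iio lam → R,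
    IsPseudoConvergent seq → IsFundamentalSeq seq → ∃ z : R, IsPseudoLimit seq z

/-- `h : V →+* Vh` presents `Vh` as the completion of `V` (with respect to the
valuation topology): it is an immediate extension, `Vh` is complete, and `V`
is dense in `Vh`. -/
structure IsValuationCompletion {V : Type*} {Vh : Type v} [CommRing V] [CommRing Vh]
    (h : V →+* Vh) : Prop where
  immediate : IsImmediate h
  complete : IsCompleteValRing Vh
  dense : ∀ x : Vh, ∀ z : V, z ≠ 0 → ∃ a : V, ValLT (h z) (x - h a)

/-- A field extension `g : K →+* L` is separable iff `M ⊗[K] L` is reduced for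
every field extension `M` of `K` (MacLane's criterion). -/
def IsSeparableFieldHom {K L : Type u} [Field K] [Field L] (g : K →+* L) : Prop :=
  ∀ (M : Type u) [Field M] (φ : K →+* M),
    letI : Algebra K L := g.toAlgebra
    letI : Algebra K M := φ.toAlgebra
    IsReduced (TensorProduct K M L)

/-- An injective extension of domains is separable if the induced extension of
fraction fields is separable. -/
def IsSeparableDomainExt {A B : Type u} [CommRing A] [IsDomain A] [CommRing B] [IsDomain B]
    (f : A →+* B) : Prop :=
  ∃ g : FractionRing A →+* FractionRing B,
    (∀ a : A, g (algebraMap A (FractionRing A) a) = algebraMap B (FractionRing B) (f a)) ∧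
    IsSeparableFieldHom g

/-- The ultrapower `Ṽ = Π_𝒰 V` of `V` with respect to the ultrafilter `𝒰` on `U`. -/
abbrev Ultrapower (U : Type u) (𝒰 : Ultrafilter U) (V : Type u) : Type u :=
  Filter.Germ (𝒰 : Filter U) V

/-- The canonical (diagonal) embedding `V → Ṽ`. -/
noncomputable def germConstHom (U : Type u) (𝒰 : Ultrafilter U) (V : Type u) [CommRing V] :
    V →+* Ultrapower U 𝒰 V :=
  (Filter.Germ.coeRingHom (𝒰 : Filter U)).comp (Pi.constRingHom U V)

/-- The ideal `q = ⋂_{z ∈ V, z ≠ 0} z Ṽ` of the ultrapower. -/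
noncomputable def sepIdeal (U : Type u) (𝒰 : Ultrafilter U) (V : Type u) [CommRing V] :
    Ideal (Ultrapower U 𝒰 V) :=
  ⨅ z : {z : V // z ≠ 0}, Ideal.span {germConstHom U 𝒰 V z.1}

/-- The separation `V̄ = Ṽ / q` of the ultrapower. -/
abbrev SepUltrapower (U : Type u) (𝒰 : Ultrafilter U) (V : Type u) [CommRing V] : Type u :=
  Ultrapower U 𝒰 V ⧸ sepIdeal U 𝒰 V

/-- The canonical map `V → V̄`. -/
noncomputable def barConstHom (U : Type u) (𝒰 : Ultrafilter U) (V : Type u) [CommRing V] :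
    V →+* SepUltrapower U 𝒰 V :=
  (Ideal.Quotient.mk (sepIdeal U 𝒰 V)).comp (germConstHom U 𝒰 V)

/-- `𝒰` is such that any system of polynomial equations of cardinality
`≤ card U` with coefficients in the ultrapower `Ṽ` has a solution in `Ṽ`
whenever every finite subsystem has one. -/
def SaturatedUltrafilter (U : Type u) (𝒰 : Ultrafilter U) (V : Type u) [CommRing V] : Prop :=
  ∀ (I J : Type u) (g : I → MvPolynomial J (Ultrapower U 𝒰 V)),
    Cardinal.mk I ≤ Cardinal.mk U →
    (∀ s : Finset I, ∃ x : J → Ultrapower U 𝒰 V, ∀ i ∈ s, MvPolynomial.eval x (g i) = 0) →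
    ∃ x : J → Ultrapower U 𝒰 V, ∀ i : I, MvPolynomial.eval x (g i) = 0

/-- A factorization of `w : B →+* V'` through a smooth `V`-algebra `C`. -/
structure SmoothFactorization (V B V' : Type u) [CommRing V] [CommRing B] [Algebra V B]
    [CommRing V'] (f : V →+* V') (w : B →+* V') : Type (u + 1) where
  C : Type u
  [instCommRing : CommRing C]
  [instAlgebra : Algebra V C]
  smooth : Algebra.Smooth V C
  p : B →+* C
  q : C →+* V'
  hp : p.comp (algebraMap V B) = algebraMap V C
  hq : q.comp (algebraMap V C) = f
  hqp : q.comp p = w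

/-- `V'` is a filtered direct limit of smooth `V`-algebras: every `V`-morphism
from a finitely presented `V`-algebra to `V'` factors through a smooth
`V`-algebra (Lazard-style characterization of filtered colimits). -/
def IsFilteredColimitOfSmooth {V V' : Type u} [CommRing V] [CommRing V'] (f : V →+* V') : Prop :=
  ∀ (B : Type u) [CommRing B] [Algebra V B], Algebra.FinitePresentation V B →
    ∀ w : B →+* V', w.comp (algebraMap V B) = f →
      Nonempty (SmoothFactorization V B V' f w)

/-
Divisibility in an ultrapower is decided coordinatewise along the ultrafilter, so `Ṽ` is again a
valuation domain, and so is every quotient of it by a prime ideal. In a valuation domain an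
intersection `⋂ zṼ` over a multiplicatively closed family of generators is prime: if `x ∉ z₀Ṽ`
then `z₀ = xt`, and `xy ∈ zz₀Ṽ = zxtṼ` lets us cancel `x`. Finally `q ∩ V = 0`, since
`a ∈ amṼ` with `a ≠ 0` forces the nonunit `m` of `V` to divide `1`.
-/

namespace Filter.Germ

variable {α β : Type*}

theorem const_dvd_const_iff [Monoid β] {l : Filter α} [l.NeBot] {a b : β} :
    (a : Germ l β) ∣ b ↔ a ∣ b := by
  refine ⟨fun ⟨c, hc⟩ => ?_, fun ⟨c, hc⟩ => ⟨c, by rw [hc]; rfl⟩⟩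
  induction c using inductionOn with | _ g =>
  obtain ⟨x, hx⟩ := (coe_eq.mp hc).exists
  exact ⟨g x, hx⟩

variable {φ : Ultrafilter α}

instance instPreValuationRing [Mul β] [PreValuationRing β] :
    PreValuationRing (Germ (φ : Filter α) β) where
  cond' f g := by
    induction f using inductionOn with | _ f =>
    induction g using inductionOn with | _ g =>
    choose c hc using fun x => PreValuationRing.cond (f x) (g x)
    exact ⟨c, (φ.eventually_or.mp (.of_forall hc)).imp coe_eq.mpr coe_eq.mpr⟩

instance instNoZeroDivisors [MulZeroClass β] [NoZeroDivisors β] :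
    NoZeroDivisors (Germ (φ : Filter α) β) where
  eq_zero_or_eq_zero_of_mul_eq_zero {f g} h := by
    induction f using inductionOn with | _ f =>
    induction g using inductionOn with | _ g =>
    exact (φ.eventually_or.mp ((coe_eq.mp h).mono fun _ => mul_eq_zero.mp)).imp
      coe_eq.mpr coe_eq.mpr

instance instIsDomain [CommRing β] [IsDomain β] : IsDomain (Germ (φ : Filter α) β) :=
  NoZeroDivisors.to_isDomain _

instance instValuationRing [CommRing β] [IsDomain β] [ValuationRing β] :
    ValuationRing (Germ (φ : Filter α) β) where

end Filter.Germ

theorem Ideal.isPrime_iInf_span_singleton {R ι : Type*} [CommRing R] [IsDomain R]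
    [ValuationRing R] (f : ι → R) (hmul : ∀ i j, ∃ k, f i * f j ∣ f k)
    (hf : ∃ i, ¬IsUnit (f i)) : (⨅ i, Ideal.span {f i}).IsPrime := by
  obtain ⟨i₀, hi₀⟩ := hf
  refine ⟨ne_top_of_le_ne_top (by simpa using hi₀) (iInf_le _ i₀), fun {x y} hxy => ?_⟩
  simp only [Ideal.mem_iInf, Ideal.mem_span_singleton] at hxy ⊢
  refine or_iff_not_imp_left.mpr fun hx i => ?_
  push Not at hx
  obtain ⟨j, hj⟩ := hx
  obtain ⟨t, ht⟩ := (ValuationRing.dvd_total (f j) x).resolve_left hj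
  have hx0 : x ≠ 0 := by rintro rfl; simp at hj
  obtain ⟨k, hk⟩ := hmul i j
  have hdvd : x * (f i * t) ∣ x * y := by
    simpa only [ht, mul_left_comm] using hk.trans (hxy k)
  exact dvd_of_mul_right_dvd ((mul_dvd_mul_iff_left hx0).mp hdvd)

instance Ideal.Quotient.instPreValuationRing {R : Type*} [CommRing R] [PreValuationRing R]
    (I : Ideal R) : PreValuationRing (R ⧸ I) :=
  Ideal.Quotient.mk_surjective.preValuationRing (Ideal.Quotient.mk I).toMonoidHom.toMulHom

section Ultrapower

variable (U : Type u) (𝒰 : Ultrafilter U) (V : Type u) [CommRing V]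

theorem germConstHom_dvd_germConstHom_iff {a b : V} :
    germConstHom U 𝒰 V a ∣ germConstHom U 𝒰 V b ↔ a ∣ b :=
  Filter.Germ.const_dvd_const_iff

theorem mem_sepIdeal_iff {x : Ultrapower U 𝒰 V} :
    x ∈ sepIdeal U 𝒰 V ↔ ∀ z : V, z ≠ 0 → germConstHom U 𝒰 V z ∣ x := by
  simp only [sepIdeal, Ideal.mem_iInf, Ideal.mem_span_singleton, Subtype.forall]

variable [IsDomain V]

theorem barConstHom_injective (hV : ¬IsField V) : Function.Injective (barConstHom U 𝒰 V) := by
  refine (injective_iff_map_eq_zero _).mpr fun a ha => by_contra fun ha0 => ?_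
  obtain ⟨m, hm0, hm⟩ := Ring.exists_not_isUnit_of_not_isField hV
  have hdvd := (mem_sepIdeal_iff U 𝒰 V).mp (Ideal.Quotient.eq_zero_iff_mem.mp ha) (a * m)
    (mul_ne_zero ha0 hm0)
  rw [germConstHom_dvd_germConstHom_iff] at hdvd
  exact hm (isUnit_of_dvd_one ((mul_dvd_mul_iff_left ha0).mp (by rwa [mul_one])))

theorem sepIdeal_isPrime [ValuationRing V] (hV : ¬IsField V) : (sepIdeal U 𝒰 V).IsPrime := by
  obtain ⟨m, hm0, hm⟩ := Ring.exists_not_isUnit_of_not_isField hV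
  refine Ideal.isPrime_iInf_span_singleton _
    (fun z z' => ⟨⟨z * z', mul_ne_zero z.2 z'.2⟩, by rw [map_mul]⟩) ⟨⟨m, hm0⟩, fun hu => hm ?_⟩
  rw [isUnit_iff_dvd_one, ← map_one (germConstHom U 𝒰 V),
    germConstHom_dvd_germConstHom_iff] at hu
  exact isUnit_of_dvd_one hu

end Ultrapower

/-- The ideal `q = ⋂_{z ∈ V, z ≠ 0} z Ṽ` of the ultrapower `Ṽ` is a
prime ideal, and hence `V̄ = Ṽ/q` is a valuation ring extending `V`.
(As in the paper, the valuation of `V` is assumed to be nontrivial, i.e. `V`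
is not a field; otherwise `q` is the unit ideal.) -/
theorem stmt_0 (U : Type u) (𝒰 : Ultrafilter U) (V : Type u)
    [CommRing V] [IsDomain V] [ValuationRing V] (hV : ¬ IsField V) :
    (sepIdeal U 𝒰 V).IsPrime ∧
    (∀ a b : SepUltrapower U 𝒰 V, ∃ c : SepUltrapower U 𝒰 V, a * c = b ∨ b * c = a) ∧
    Function.Injective (barConstHom U 𝒰 V) :=
  ⟨sepIdeal_isPrime U 𝒰 V hV, PreValuationRing.cond, barConstHom_injective U 𝒰 V hV⟩
end

section
/- Let U be an infinite set with card U = τ. Then there exists an ultrafilter 𝒰 on U such that for every valuation ring V, any system of polynomial equations (g_i((X_j)_{j∈J}))_{i∈I} with card I ≤ τ, in variables (X_j)_{j∈J}, with coefficients in the ultrapower Ṽ = Π_𝒰 V, has a solution in Ṽ if and only if all of its finite subsystems have solutions in Ṽ. -/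
/-!
Common definitions for formalizing "Immediate extensions of valuation rings
and ultrapowers" (D. Popescu).

In a valuation ring (or any commutative ring, via divisibility) we encode the
comparison of values: `val a < val b` iff `a ∣ b` and `¬ b ∣ a`, and
`val a = val b` iff `a ∣ b ∧ b ∣ a`.
-/

universe u v

open Filter

/-!
By Keisler, an ultrapower by a countably incomplete `(card U)⁺`-good ultrafilter `𝒰` is
`(card U)⁺`-saturated. For systems of equations this is direct: index the equations by points of
`U`, let `σ → ∞` along `𝒰`, and let `h t` be the set of coordinates `u` with `card t ≤ σ u` at
which the equations indexed by `t` have a common solution; by Łoś `h t ∈ 𝒰`. A multiplicative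
refinement `g` of `h` leaves at each coordinate `u` only the finitely many equations `i` with
`u ∈ g {i}`, which are solvable together; the coordinatewise solutions form a solution in the
ultrapower.

Such ultrafilters exist by Kunen's construction. Start from an independent family of
`2 ^ card U` functions `F A : U → Finset U` and run a transfinite recursion of length
`2 ^ card U` that decides every subset of `U` and refines every antitone family `h`, keeping the
unused functions independent modulo the filter built so far. A single fresh function codes the
refinement `s ↦ {u | s ⊆ F A u ∧ u ∈ h (F A u)}`, and deciding a set costs only finitely many
functions.
-/

open Cardinal Filter Set

section Saturation

variable {U : Type*}

def IsMultiplicative [DecidableEq U] (g : Finset U → Set U) : Prop :=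
  ∀ a b, g a ∩ g b ⊆ g (a ∪ b)

/-- Keisler's `(card U)⁺`-goodness: the finite subsets of an index set of cardinality `card U`
are represented by `Finset U`. -/
def Ultrafilter.IsGood [DecidableEq U] (𝒰 : Ultrafilter U) : Prop :=
  ∀ h : Finset U → Set U, Antitone h → (∀ s, h s ∈ 𝒰) →
    ∃ g ≤ h, IsMultiplicative g ∧ ∀ s, g s ∈ 𝒰

namespace IsMultiplicative

variable [DecidableEq U] {g : Finset U → Set U}

theorem mem_of_forall_mem_singleton (hg : IsMultiplicative g) {t : Finset U}
    (ht : t.Nonempty) {u : U} (hu : ∀ x ∈ t, u ∈ g {x}) : u ∈ g t := by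
  induction ht using Finset.Nonempty.cons_induction with
  | singleton x => exact hu x (Finset.mem_singleton_self x)
  | cons x t hx ht ih =>
    rw [Finset.cons_eq_insert, Finset.insert_eq]
    exact hg _ _ ⟨hu x (by simp), ih fun y hy => hu y (by simp [hy])⟩

theorem finite_setOf_mem_singleton (hg : IsMultiplicative g) {σ : U → ℕ}
    (hσ : ∀ t, ∀ u ∈ g t, t.card ≤ σ u) (u : U) : {x | u ∈ g {x}}.Finite := by
  by_contra hinf
  obtain ⟨t, hts, hcard⟩ := Set.Infinite.exists_subset_card_eq hinf (σ u + 1)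
  have ht : t.Nonempty := Finset.card_pos.1 (by omega)
  have := hσ t u (hg.mem_of_forall_mem_singleton ht fun x hx => hts hx)
  omega

end IsMultiplicative

theorem Filter.Germ.eval_map_coeRingHom {V J : Type*} [CommRing V] (l : Filter U)
    (x : J → U → V) (p : MvPolynomial J (U → V)) :
    MvPolynomial.eval (fun j => (x j : l.Germ V)) (p.map (Germ.coeRingHom l)) =
      ↑(fun u => p.eval₂ (Pi.evalRingHom _ u) fun j => x j u) := by
  rw [MvPolynomial.eval_map]
  suffices MvPolynomial.eval₂Hom (Germ.coeRingHom l) (fun j => (x j : l.Germ V)) =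
      (Germ.coeRingHom l).comp
        (RingHom.pi fun u => MvPolynomial.eval₂Hom (Pi.evalRingHom _ u) fun j => x j u) from
    RingHom.congr_fun this p
  ext <;>
    simp only [RingHom.comp_apply, MvPolynomial.eval₂Hom_C, MvPolynomial.eval₂Hom_X'] <;>
    congr 1 <;> funext u <;> simp

variable {V I J : Type*} [CommRing V]

def HasSolutionAt (G : I → MvPolynomial J (U → V)) (s : Set I) (u : U) : Prop :=
  ∃ y : J → V, ∀ i ∈ s, (G i).eval₂ (Pi.evalRingHom _ u) y = 0

theorem eventually_hasSolutionAt {l : Filter U} (G : I → MvPolynomial J (U → V))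
    (s : Finset I) (x : J → l.Germ V)
    (hx : ∀ i ∈ s, MvPolynomial.eval x ((G i).map (Germ.coeRingHom l)) = 0) :
    ∀ᶠ u in l, HasSolutionAt G s u := by
  choose x' hx' using fun j => (x j).inductionOn (p := fun y => ∃ f : U → V, ↑f = y)
    fun f => ⟨f, rfl⟩
  have hzero : ∀ i ∈ s, ∀ᶠ u in l, (G i).eval₂ (Pi.evalRingHom _ u) (fun j => x' j u) = 0 := by
    intro i hi
    have := hx i hi
    rwa [← funext hx', Germ.eval_map_coeRingHom, ← Germ.coe_zero, Germ.coe_eq] at this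
  filter_upwards [s.eventually_all.2 hzero] with u hu
  exact ⟨fun j => x' j u, hu⟩

end Saturation

theorem Ultrafilter.IsGood.saturatedUltrafilter {U : Type u} [DecidableEq U] {𝒰 : Ultrafilter U}
    (hgood : 𝒰.IsGood) {σ : U → ℕ} (hσ : Tendsto σ 𝒰 atTop) (V : Type u) [CommRing V] :
    SaturatedUltrafilter U 𝒰 V := by
  intro I J g hI hfin
  obtain ⟨ι⟩ := (Cardinal.le_def I U).1 hI
  choose G hG using fun i => MvPolynomial.map_surjective _
    (fun y => y.inductionOn (p := fun y => ∃ f, Germ.coeRingHom _ f = y) fun f => ⟨f, rfl⟩) (g i)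
  set h : Finset U → Set U := fun t => {u | t.card ≤ σ u ∧ HasSolutionAt G (ι ⁻¹' t) u}
  have hh : Antitone h := fun a b hab u hu =>
    ⟨(Finset.card_le_card hab).trans hu.1, hu.2.imp fun y hy i hi => hy i (hab hi)⟩
  have hh𝒰 : ∀ t, h t ∈ 𝒰 := by
    intro t
    obtain ⟨x, hx⟩ := hfin (t.preimage ι ι.injective.injOn)
    filter_upwards [hσ.eventually_ge_atTop t.card,
      eventually_hasSolutionAt G _ x fun i hi => (hG i).symm ▸ hx i hi] with u hσu hu
    exact ⟨hσu, by simpa using hu⟩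
  obtain ⟨f, hfh, hf, hf𝒰⟩ := hgood h hh hh𝒰
  have hlocal : ∀ u, HasSolutionAt G {i | u ∈ f {ι i}} u := by
    intro u
    set T := (hf.finite_setOf_mem_singleton (fun t u hu => (hfh t hu).1) u).toFinset
    by_cases hT : T.Nonempty
    · have huT : u ∈ f T := hf.mem_of_forall_mem_singleton hT fun x hx => by simpa [T] using hx
      obtain ⟨y, hy⟩ := (hfh T huT).2
      exact ⟨y, fun i hi => hy i (by simpa [T] using hi)⟩
    · exact ⟨0, fun i hi => absurd ⟨ι i, by simpa [T] using hi⟩ hT⟩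
  choose y hy using hlocal
  refine ⟨fun j => ↑(fun u => y u j), fun i => ?_⟩
  rw [← hG i, Germ.eval_map_coeRingHom, ← Germ.coe_zero, Germ.coe_eq]
  exact mem_of_superset (hf𝒰 {ι i}) fun u hu => hy u i hu

section IndependentFamily

variable {U : Type u}

def IsIndependentFamily (σ : U → ℕ) (F : Set U → U → Finset U) : Prop :=
  ∀ (m : ℕ) (C : Finset (Set U)) (t : Set U → Finset U), ∃ u, m ≤ σ u ∧ ∀ A ∈ C, F A u = t A

open scoped Classical in
theorem exists_card_le_injOn_filter_mem [Infinite U] (C : Finset (Set U)) (m : ℕ) :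
    ∃ s : Finset U, m ≤ s.card ∧ Set.InjOn (fun A : Set U => s.filter (· ∈ A)) C := by
  classical
  have hsep : ∀ p : Set U × Set U, ∃ x, p.1 ≠ p.2 → ¬(x ∈ p.1 ↔ x ∈ p.2) := fun p =>
    if hp : p.1 = p.2 then ⟨Classical.arbitrary U, fun h => (h hp).elim⟩
    else (not_forall.1 fun h => hp (Set.ext h)).imp fun _ hx _ => hx
  choose w hw using hsep
  obtain ⟨s, hws, hcard⟩ := Infinite.exists_superset_card_eq (C.offDiag.image w)
    (max m (C.offDiag.image w).card) (le_max_right _ _)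
  refine ⟨s, hcard ▸ le_max_left _ _, fun A hA B hB hAB => by_contra fun hne => ?_⟩
  have hws : w (A, B) ∈ s := hws (Finset.mem_image_of_mem _ (by simpa [hne] using ⟨hA, hB⟩))
  exact hw (A, B) hne (by simpa [hws] using congrArg (w (A, B) ∈ ·) hAB)

theorem exists_isIndependentFamily (U : Type u) [Infinite U] :
    ∃ σ F, IsIndependentFamily (U := U) σ F := by
  classical
  obtain ⟨e⟩ : Nonempty (U ≃ Finset U × (Finset U →₀ Multiset U)) := Cardinal.eq.1 <| by
    simp [mul_eq_self (aleph0_le_mk U)]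
  refine ⟨fun u => (e u).1.card, fun A u => ((e u).2 ((e u).1.filter (· ∈ A))).toFinset,
    fun m C t => ?_⟩
  obtain ⟨s, hm, hs⟩ := exists_card_le_injOn_filter_mem C m
  set φ := ∑ A ∈ C, Finsupp.single (s.filter (· ∈ A)) (t A).val
  refine ⟨e.symm (s, φ), by simpa using hm, fun A hA => ?_⟩
  suffices φ (s.filter (· ∈ A)) = (t A).val by simp [this]
  rw [Finsupp.finsetSum_apply, Finset.sum_eq_single A]
  · simp
  · exact fun B hB hBA => Finsupp.single_eq_of_ne fun h => hBA (hs hB hA h.symm)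
  · exact fun h => (h hA).elim

end IndependentFamily

section IndepModulo

variable {U : Type u} {σ : U → ℕ} {F : Set U → U → Finset U}

variable (σ F) in
/-- Kunen's independence of the functions `F A`, `A ∉ K`, modulo the filter generated by `E` and
the sets `{u | m ≤ σ u}`. -/
def IndepModulo (E K : Set (Set U)) : Prop :=
  ∀ (m : ℕ) (G : Finset (Set U)), ↑G ⊆ E → ∀ C : Finset (Set U), (∀ A ∈ C, A ∉ K) →
    ∀ t : Set U → Finset U, ∃ u, m ≤ σ u ∧ (∀ X ∈ G, u ∈ X) ∧ ∀ A ∈ C, F A u = t A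

def refinementAlong (F : Set U → U → Finset U) (A : Set U) (h : Finset U → Set U)
    (s : Finset U) : Set U :=
  {u | s ⊆ F A u ∧ u ∈ h (F A u)}

theorem refinementAlong_le {A : Set U} {h : Finset U → Set U} (hh : Antitone h) :
    refinementAlong F A h ≤ h :=
  fun _ _ hu => hh hu.1 hu.2

theorem isMultiplicative_refinementAlong [DecidableEq U] (A : Set U) (h : Finset U → Set U) :
    IsMultiplicative (refinementAlong F A h) :=
  fun _ _ _ hu => ⟨Finset.union_subset hu.1.1 hu.2.1, hu.1.2⟩

namespace IndepModulo

variable {E K : Set (Set U)}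

theorem exists_mem_sInter (hI : IndepModulo σ F E K) (m : ℕ) {G : Set (Set U)} (hGE : G ⊆ E)
    (hG : G.Finite) : ∃ u, m ≤ σ u ∧ u ∈ ⋂₀ G := by
  obtain ⟨u, hm, hu, -⟩ := hI m hG.toFinset (by simpa using hGE) ∅ (by simp) fun _ => ∅
  exact ⟨u, hm, fun X hX => hu X (hG.mem_toFinset.2 hX)⟩

theorem iSup {ι : Type*} [Preorder ι] [IsDirectedOrder ι] {S : ι → Set (Set U) × Set (Set U)}
    (hF : IsIndependentFamily σ F) (hS : Monotone S) (h : ∀ i, IndepModulo σ F (S i).1 (S i).2) :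
    IndepModulo σ F (⨆ i, S i).1 (⨆ i, S i).2 := by
  rw [Prod.fst_iSup, Prod.snd_iSup]
  intro m G hG C hC t
  rcases G.eq_empty_or_nonempty with rfl | ⟨X, hX⟩
  · obtain ⟨u, hm, hu⟩ := hF m C t
    exact ⟨u, hm, by simp, hu⟩
  · have : Nonempty ι := (mem_iUnion.1 (hG hX)).nonempty
    obtain ⟨i, hi⟩ :=
      (monotone_fst.comp hS).directed_le.exists_mem_subset_of_finset_subset_biUnion hG
    exact h i m G hi C (fun A hA hAK => hC A hA (mem_iUnion_of_mem i hAK)) t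

theorem exists_compl (hI : IndepModulo σ F E K) {A : Set U}
    (hA : ¬IndepModulo σ F (insert A E) K) :
    ∃ C : Finset (Set U), IndepModulo σ F (insert Aᶜ E) (K ∪ C) := by
  classical
  simp only [IndepModulo, not_forall, not_exists, not_and] at hA
  obtain ⟨m, G, hG, C, hC, t, hfail⟩ := hA
  refine ⟨C, fun m' G' hG' C' hC' t' => ?_⟩
  obtain ⟨u, hm, hu, hut⟩ := hI (max m m') (G.erase A ∪ G'.erase Aᶜ)
    (by
      simp only [Finset.coe_union, Finset.coe_erase]
      exact union_subset (sdiff_singleton_subset_iff.2 hG) (sdiff_singleton_subset_iff.2 hG'))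
    (C ∪ C')
    (by
      simp only [Finset.mem_union]
      rintro B (hB | hB) hBK
      · exact hC B hB hBK
      · exact hC' B hB (mem_union_left _ hBK))
    (fun B => if B ∈ C then t B else t' B)
  -- otherwise `u` would contradict the failure of independence after adding `A`
  have huA : u ∉ A := by
    intro huA
    obtain ⟨B, hB, hne⟩ := hfail u (le_of_max_le_left hm) fun X hX =>
      if hXA : X = A then hXA ▸ huA
      else hu X (Finset.mem_union_left _ (Finset.mem_erase.2 ⟨hXA, hX⟩))
    exact hne (by simpa [hB] using hut B (Finset.mem_union_left _ hB))
  refine ⟨u, le_of_max_le_right hm, fun X hX => ?_, fun B hB => ?_⟩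
  · by_cases hXA : X = Aᶜ
    · exact hXA ▸ huA
    · exact hu X (Finset.mem_union_right _ (Finset.mem_erase.2 ⟨hXA, hX⟩))
  · have hBC : B ∉ C := fun hBC => hC' B hB (mem_union_right _ hBC)
    simpa [hBC] using hut B (Finset.mem_union_right _ hB)

theorem union_range_refinementAlong (hI : IndepModulo σ F E K) {A : Set U} (hA : A ∉ K)
    {h : Finset U → Set U} (hE : ∀ s, h s ∈ E) :
    IndepModulo σ F (E ∪ range (refinementAlong F A h)) (insert A K) := by
  classical
  intro m G hG C hC t
  obtain ⟨S, -, hS⟩ := Finset.subset_set_image_iff.1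
    (show ↑(G.filter (· ∉ E)) ⊆ refinementAlong F A h '' univ by
      intro X hX
      rw [Finset.mem_coe, Finset.mem_filter] at hX
      simpa [hX.2] using hG hX.1)
  obtain ⟨u, hm, hu, hut⟩ := hI m (insert (h (S.sup id)) (G.filter (· ∈ E)))
    (by
      rw [Finset.coe_insert, insert_subset_iff]
      exact ⟨hE _, fun X hX => (Finset.mem_filter.1 hX).2⟩)
    (insert A C)
    (by
      simp only [Finset.mem_insert]
      rintro B (rfl | hB) hBK
      · exact hA hBK
      · exact hC B hB (mem_insert_of_mem _ hBK))
    (Function.update t A (S.sup id))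
  -- `F A u = S.sup id` puts `u` into `refinementAlong F A h s` for every `s ∈ S`
  have huA : F A u = S.sup id := by simpa using hut A (Finset.mem_insert_self _ _)
  refine ⟨u, hm, fun X hX => ?_, fun B hB => ?_⟩
  · by_cases hXE : X ∈ E
    · exact hu X (Finset.mem_insert_of_mem (Finset.mem_filter.2 ⟨hX, hXE⟩))
    · obtain ⟨s, hs, rfl⟩ := Finset.mem_image.1 (hS ▸ Finset.mem_filter.2 ⟨hX, hXE⟩)
      exact ⟨huA ▸ Finset.le_sup (f := id) hs, huA ▸ hu _ (Finset.mem_insert_self _ _)⟩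
  · have hBA : B ≠ A := fun hBA => hC B hB (hBA ▸ mem_insert _ _)
    simpa [hBA] using hut B (Finset.mem_insert_of_mem hB)

end IndepModulo

end IndepModulo

section Construction

variable {U : Type u}

theorem mk_finset_arrow_set [Infinite U] : #(Finset U → Set U) = #(Set U) := by
  rw [← power_def, mk_set, mk_finset_of_infinite, ← power_mul, mul_eq_self (aleph0_le_mk U)]

theorem mk_Iio_toType_lt {c : Cardinal.{u}} (i : c.ord.ToType) : #(Iio i) < c := by
  simpa using mk_Iio_lt i (by rw [mk_ord_toType, Ordinal.type_toType])

/-- Step `(h, some s)` decides the set `h s` and step `(h, ⊤)` refines `h`. -/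
abbrev Step (U : Type u) : Type u :=
  (#(Finset U → Set U)).ord.ToType ×ₗ WithTop (#(Finset U)).ord.ToType

namespace Step

noncomputable def fnEquiv : (Finset U → Set U) ≃ (#(Finset U → Set U)).ord.ToType :=
  Classical.choice (Cardinal.eq.1 (mk_ord_toType _).symm)

noncomputable def finsetEquiv : Finset U ≃ (#(Finset U)).ord.ToType :=
  Classical.choice (Cardinal.eq.1 (mk_ord_toType _).symm)

noncomputable def fn (x : Step U) : Finset U → Set U :=
  fnEquiv.symm (ofLex x).1

noncomputable def decision (h : Finset U → Set U) (s : Finset U) : Step U :=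
  toLex (fnEquiv h, ↑(finsetEquiv s))

noncomputable def refinement (h : Finset U → Set U) : Step U :=
  toLex (fnEquiv h, ⊤)

theorem mk_Iic_lt [Infinite U] (x : Step U) : #(Iic x) < #(Set U) := by
  have h2U : ℵ₀ < #(Set U) := (aleph0_le_mk U).trans_lt (mk_set ▸ cantor _)
  have hfst : #(Iic (ofLex x).1) < #(Set U) := by
    rw [← Iio_insert]
    refine mk_insert_le.trans_lt (add_lt_of_lt h2U.le ?_ (one_lt_aleph0.trans h2U))
    exact mk_finset_arrow_set (U := U) ▸ mk_Iio_toType_lt _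
  have hsnd : #(WithTop (#(Finset U)).ord.ToType) < #(Set U) := by
    rw [WithTop, mk_option, mk_ord_toType, mk_finset_of_infinite]
    exact add_lt_of_lt h2U.le (mk_set ▸ cantor _) (one_lt_aleph0.trans h2U)
  calc #(Iic x) ≤ #(Iic (ofLex x).1 × WithTop (#(Finset U)).ord.ToType) :=
        mk_le_of_injective (f := fun y => (⟨(ofLex y.1).1, Prod.Lex.monotone_fst _ _ y.2⟩,
          (ofLex y.1).2)) fun y y' h => by
          simp only [Prod.mk.injEq] at h
          exact Subtype.ext (ofLex.injective (Prod.ext (congrArg Subtype.val h.1) h.2))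
    _ = #(Iic (ofLex x).1) * #(WithTop (#(Finset U)).ord.ToType) := by simp
    _ < #(Set U) := mul_lt_of_lt h2U.le hfst hsnd

theorem decision_lt_refinement (h : Finset U → Set U) (s : Finset U) :
    decision h s < refinement h :=
  Prod.Lex.lt_iff.2 (Or.inr ⟨rfl, WithTop.coe_lt_top _⟩)

variable [DecidableEq U]

/-- What step `x` has to achieve when it enlarges the generators `E` to `E'`. -/
def Goal (x : Step U) (E E' : Set (Set U)) : Prop :=
  match (ofLex x).2 with
  | some c => x.fn (finsetEquiv.symm c) ∈ E' ∨ (x.fn (finsetEquiv.symm c))ᶜ ∈ E'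
  | none => Antitone x.fn → (∀ s, x.fn s ∈ E) → ∃ g ≤ x.fn, IsMultiplicative g ∧ ∀ s, g s ∈ E'

theorem goal_decision {h : Finset U → Set U} {s : Finset U} {E E' : Set (Set U)} :
    (decision h s).Goal E E' ↔ h s ∈ E' ∨ (h s)ᶜ ∈ E' := by
  simp [Goal, decision, fn]

theorem goal_refinement {h : Finset U → Set U} {E E' : Set (Set U)} :
    (refinement h).Goal E E' ↔
      (Antitone h → (∀ s, h s ∈ E) → ∃ g ≤ h, IsMultiplicative g ∧ ∀ s, g s ∈ E') := by
  simp [Goal, refinement, fn]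

end Step

end Construction

section Recursion

variable {U : Type u} [DecidableEq U] {σ : U → ℕ} {F : Set U → U → Finset U}

variable (σ F)

/-- A stage `S = (E, K)` consists of generators `E` of the filter under construction and the
indices `K` of the functions `F A` already spent. -/
def StepSpec (x : Step U) (S S' : Set (Set U) × Set (Set U)) : Prop :=
  S ≤ S' ∧ IndepModulo σ F S'.1 S'.2 ∧ (∃ W : Finset (Set U), S'.2 ⊆ S.2 ∪ W) ∧
    x.Goal S.1 S'.1

open scoped Classical in
noncomputable def extend (x : Step U) (S : Set (Set U) × Set (Set U)) :
    Set (Set U) × Set (Set U) :=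
  if h : ∃ S', StepSpec σ F x S S' then h.choose else S

noncomputable def stage : Step U → Set (Set U) × Set (Set U) :=
  wellFounded_lt.fix fun x rec => extend σ F x (⨆ y : Iio x, rec y y.2)

noncomputable def stageBefore (x : Step U) : Set (Set U) × Set (Set U) :=
  ⨆ y : Iio x, stage σ F y

noncomputable def limitStage : Set (Set U) × Set (Set U) :=
  ⨆ x, stage σ F x

variable {σ F}

theorem stage_eq (x : Step U) : stage σ F x = extend σ F x (stageBefore σ F x) := by
  rw [stage, WellFounded.fix_eq]
  rfl

theorem le_extend (x : Step U) (S : Set (Set U) × Set (Set U)) : S ≤ extend σ F x S := by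
  unfold extend
  split_ifs with h
  exacts [h.choose_spec.1, le_rfl]

theorem stepSpec_extend {x : Step U} {S : Set (Set U) × Set (Set U)}
    (h : ∃ S', StepSpec σ F x S S') : StepSpec σ F x S (extend σ F x S) := by
  rw [extend, dif_pos h]
  exact h.choose_spec

theorem stage_le_stageBefore {x y : Step U} (h : y < x) : stage σ F y ≤ stageBefore σ F x :=
  le_iSup (fun y : Iio x => stage σ F y) ⟨y, h⟩

theorem monotone_stage : Monotone (stage σ F) := by
  intro y x h
  rcases h.eq_or_lt with rfl | h
  · exact le_rfl
  · exact (stage_le_stageBefore h).trans (stage_eq x ▸ le_extend _ _)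

theorem stage_le_limitStage (x : Step U) : stage σ F x ≤ limitStage σ F :=
  le_iSup (stage σ F) x

theorem exists_stepSpec (x : Step U) {S : Set (Set U) × Set (Set U)}
    (hI : IndepModulo σ F S.1 S.2) (hK : S.2 ≠ Set.univ) : ∃ S', StepSpec σ F x S S' := by
  obtain ⟨A, hA⟩ := (ne_univ_iff_exists_notMem _).1 hK
  rcases hx : (ofLex x).2 with _ | c
  · by_cases hyp : Antitone x.fn ∧ ∀ s, x.fn s ∈ S.1
    · refine ⟨(S.1 ∪ range (refinementAlong F A x.fn), insert A S.2),
        ⟨subset_union_left, subset_insert _ _⟩, hI.union_range_refinementAlong hA hyp.2,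
        ⟨{A}, by simp⟩, ?_⟩
      simp only [Step.Goal, hx]
      exact fun _ _ => ⟨_, refinementAlong_le hyp.1, isMultiplicative_refinementAlong _ _,
        fun s => mem_union_right _ (mem_range_self s)⟩
    · refine ⟨S, le_rfl, hI, ⟨∅, by simp⟩, ?_⟩
      simp only [Step.Goal, hx]
      exact fun h₁ h₂ => (hyp ⟨h₁, h₂⟩).elim
  · set B := x.fn (Step.finsetEquiv.symm c)
    by_cases hB : IndepModulo σ F (insert B S.1) S.2
    · exact ⟨(insert B S.1, S.2), ⟨subset_insert _ _, le_rfl⟩, hB, ⟨∅, by simp⟩,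
        by simp [Step.Goal, hx, B]⟩
    · obtain ⟨C, hC⟩ := hI.exists_compl hB
      exact ⟨(insert Bᶜ S.1, S.2 ∪ C), ⟨subset_insert _ _, subset_union_left⟩, hC,
        ⟨C, subset_rfl⟩, by simp [Step.Goal, hx, B]⟩

theorem indepModulo_stageBefore (hF : IsIndependentFamily σ F) {x : Step U}
    (h : ∀ y < x, IndepModulo σ F (stage σ F y).1 (stage σ F y).2) :
    IndepModulo σ F (stageBefore σ F x).1 (stageBefore σ F x).2 :=
  .iSup hF (monotone_stage.comp (Subtype.mono_coe _)) fun y => h y y.2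

theorem mk_stageBefore_snd_le {x : Step U} (h : ∀ y < x, #(stage σ F y).2 ≤ #(Iic y) + ℵ₀) :
    #(stageBefore σ F x).2 ≤ #(Iic x) + ℵ₀ := by
  rw [stageBefore, Prod.snd_iSup]
  refine (mk_iUnion_le _).trans ?_
  calc #(Iio x) * ⨆ y : Iio x, #(stage σ F y).2
      ≤ (#(Iic x) + ℵ₀) * (#(Iic x) + ℵ₀) := by
        refine mul_le_mul' ((mk_le_mk_of_subset Iio_subset_Iic_self).trans le_self_add)
          (ciSup_le' fun y => (h y y.2).trans ?_)
        exact add_le_add_left (mk_le_mk_of_subset (Iic_subset_Iic.2 (mem_Iio.1 y.2).le)) _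
    _ = #(Iic x) + ℵ₀ := mul_eq_self le_add_self

/-- Fewer than `2 ^ card U` functions are spent before each step, so a fresh one is available. -/
theorem stepSpec_stage [Infinite U] (hF : IsIndependentFamily σ F) (x : Step U) :
    StepSpec σ F x (stageBefore σ F x) (stage σ F x) ∧ #(stage σ F x).2 ≤ #(Iic x) + ℵ₀ := by
  induction x using WellFoundedLT.induction with
  | _ x ih =>
  have hI := indepModulo_stageBefore hF fun y hy => (ih y hy).1.2.1
  have hK := mk_stageBefore_snd_le fun y hy => (ih y hy).2
  have hK' : (stageBefore σ F x).2 ≠ Set.univ := fun h => by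
    have h2U : ℵ₀ < #(Set U) := (aleph0_le_mk U).trans_lt (mk_set ▸ cantor _)
    refine (hK.trans_lt (add_lt_of_lt h2U.le (Step.mk_Iic_lt x) h2U)).ne ?_
    rw [h, mk_univ]
  have hspec := stepSpec_extend (exists_stepSpec x hI hK')
  rw [stage_eq]
  refine ⟨hspec, ?_⟩
  obtain ⟨W, hW⟩ := hspec.2.2.1
  calc #(extend σ F x (stageBefore σ F x)).2 ≤ #(stageBefore σ F x).2 + #(W : Set (Set U)) :=
        (mk_le_mk_of_subset hW).trans (mk_union_le _ _)
    _ ≤ #(Iic x) + ℵ₀ + ℵ₀ := add_le_add hK W.finite_toSet.lt_aleph0.le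
    _ = #(Iic x) + ℵ₀ := by rw [add_assoc, aleph0_add_aleph0]

end Recursion

section Limit

variable {U : Type u} [DecidableEq U] [Infinite U] {σ : U → ℕ} {F : Set U → U → Finset U}

theorem indepModulo_limitStage (hF : IsIndependentFamily σ F) :
    IndepModulo σ F (limitStage σ F).1 (limitStage σ F).2 :=
  .iSup hF monotone_stage fun x => (stepSpec_stage hF x).1.2.1

theorem mem_or_compl_mem_limitStage (hF : IsIndependentFamily σ F) (A : Set U) :
    A ∈ (limitStage σ F).1 ∨ Aᶜ ∈ (limitStage σ F).1 := by
  have hx := stage_le_limitStage (σ := σ) (F := F) (Step.decision (fun _ => A) ∅)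
  exact (Step.goal_decision.1 (stepSpec_stage hF _).1.2.2.2).imp (fun h => hx.1 h) fun h => hx.1 h

theorem exists_isMultiplicative_le_of_compl_notMem (hF : IsIndependentFamily σ F)
    {h : Finset U → Set U} (hh : Antitone h) (hlim : ∀ s, (h s)ᶜ ∉ (limitStage σ F).1) :
    ∃ g ≤ h, IsMultiplicative g ∧ ∀ s, g s ∈ (limitStage σ F).1 := by
  have hmem : ∀ s, h s ∈ (stageBefore σ F (Step.refinement h)).1 := fun s =>
    (stage_le_stageBefore (Step.decision_lt_refinement h s)).1 <|
      (Step.goal_decision.1 (stepSpec_stage hF _).1.2.2.2).resolve_right fun hc =>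
        hlim s ((stage_le_limitStage _).1 hc)
  obtain ⟨g, hgh, hg, hgE⟩ := Step.goal_refinement.1 (stepSpec_stage hF _).1.2.2.2 hh hmem
  exact ⟨g, hgh, hg, fun s => (stage_le_limitStage _).1 (hgE s)⟩

end Limit

theorem exists_isGood_ultrafilter (U : Type u) [Infinite U] [DecidableEq U] :
    ∃ 𝒰 : Ultrafilter U, 𝒰.IsGood ∧ ∃ σ : U → ℕ, Tendsto σ 𝒰 atTop := by
  obtain ⟨σ, F, hF⟩ := exists_isIndependentFamily U
  set E := (limitStage σ F).1
  have hI := indepModulo_limitStage hF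
  have : (generate E).NeBot := generate_neBot_iff.2 fun G hG hfin =>
    (hI.exists_mem_sInter 0 hG hfin).imp fun _ h => h.2
  have hmem : ∀ A, A ∈ Ultrafilter.of (generate E) ↔ A ∈ E := fun A =>
    ⟨fun hA => (mem_or_compl_mem_limitStage hF A).resolve_right fun hc =>
        Ultrafilter.compl_notMem_iff.2 hA (Ultrafilter.of_le _ (mem_generate_of_mem hc)),
      fun hA => Ultrafilter.of_le _ (mem_generate_of_mem hA)⟩
  refine ⟨.of (generate E), fun h hh h𝒰 => ?_, σ, tendsto_atTop.2 fun n => ?_⟩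
  · obtain ⟨g, hgh, hg, hgE⟩ := exists_isMultiplicative_le_of_compl_notMem hF hh fun s hc =>
      Ultrafilter.compl_notMem_iff.2 (h𝒰 s) ((hmem _).2 hc)
    exact ⟨g, hgh, hg, fun s => (hmem _).2 (hgE s)⟩
  · refine Ultrafilter.compl_notMem_iff.1 fun hc => ?_
    rw [hmem] at hc
    obtain ⟨u, hu, hu'⟩ := hI.exists_mem_sInter n (singleton_subset_iff.2 hc) (finite_singleton _)
    exact (by simpa using hu' : ¬n ≤ σ u) hu

/-- For an infinite set `U` of cardinality `τ` there is an
ultrafilter `𝒰` on `U` such that for every valuation ring `V`, a system of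
polynomial equations `(g i)_{i ∈ I}` with `card I ≤ τ`, in variables indexed
by `J`, with coefficients in `Ṽ = Π_𝒰 V`, has a solution in `Ṽ` iff every
finite subsystem has one. -/
theorem stmt_1 (U : Type u) [Infinite U] (τ : Cardinal.{u}) (hτ : Cardinal.mk U = τ) :
    ∃ 𝒰 : Ultrafilter U,
      ∀ (V : Type u) [CommRing V] [IsDomain V] [ValuationRing V]
        (I J : Type u) (g : I → MvPolynomial J (Ultrapower U 𝒰 V)),
        Cardinal.mk I ≤ τ →
        ((∃ x : J → Ultrapower U 𝒰 V, ∀ i : I, MvPolynomial.eval x (g i) = 0) ↔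
          ∀ s : Finset I, ∃ x : J → Ultrapower U 𝒰 V,
            ∀ i ∈ s, MvPolynomial.eval x (g i) = 0) := by
  classical
  obtain ⟨𝒰, hgood, σ, hσ⟩ := exists_isGood_ultrafilter U
  refine ⟨𝒰, fun V _ _ _ I J g hI => ⟨fun ⟨x, hx⟩ s => ⟨x, fun i _ => hx i⟩, fun hfin => ?_⟩⟩
  exact hgood.saturatedUltrafilter hσ V I J g (hτ ▸ hI) hfin
end
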